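/- Under Hypothesis 1, for any m ≥ 1 and any times 0 < t₁ < t₂ < ⋯ < t_m ≤ T, the symmetric (md)×(md) block matrix whose (i,j) block is K(t_i,t_j) is positive definite; that is, for ξ = (ξ₁,…,ξ_m) ∈ (ℝ^d)^m one has Σ_{i,j=1}^m ⟨ξ_i, K(t_i,t_j) ξ_j⟩ ≥ 0, with equality only if ξ = 0. -/

import Mathlib

open MeasureTheory Matrix Filter
open scoped RealInnerProductSpace

/-- The matrix exponential `e^{tA}`. -/
noncomputable def matExp {d : ℕ} (t : ℝ) (A : Matrix (Fin d) (Fin d) ℝ) :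
    Matrix (Fin d) (Fin d) ℝ :=
  NormedSpace.exp (t • A)

/-- `Q_t = ∫₀ᵗ e^{sA} C e^{sAᵀ} ds`, defined entrywise. -/
noncomputable def covQ {d : ℕ} (A C : Matrix (Fin d) (Fin d) ℝ) (t : ℝ) :
    Matrix (Fin d) (Fin d) ℝ :=
  Matrix.of fun i j => ∫ s in (0:ℝ)..t, (matExp s A * C * matExp s Aᵀ) i j

/-- `U = ∫₀ᵀ r e^{rA} C e^{rAᵀ} dr`, defined entrywise. -/
noncomputable def matU {d : ℕ} (A C : Matrix (Fin d) (Fin d) ℝ) (T : ℝ) :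
    Matrix (Fin d) (Fin d) ℝ :=
  Matrix.of fun i j => ∫ r in (0:ℝ)..T, r * (matExp r A * C * matExp r Aᵀ) i j

/-- `K(t,s) = ∫₀^{min(t,s)} e^{(t−r)A} C e^{(s−r)Aᵀ} dr`, defined entrywise. -/
noncomputable def kerK {d : ℕ} (A C : Matrix (Fin d) (Fin d) ℝ) (t s : ℝ) :
    Matrix (Fin d) (Fin d) ℝ :=
  Matrix.of fun i j => ∫ r in (0:ℝ)..(min t s), (matExp (t - r) A * C * matExp (s - r) Aᵀ) i j

/-! ### Auxiliary definitions and lemmas -/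

section Helpers

variable {d : ℕ} (A C : Matrix (Fin d) (Fin d) ℝ)

lemma matExp_continuous : Continuous fun s : ℝ => matExp s A := by
  letI : SeminormedRing (Matrix (Fin d) (Fin d) ℝ) := Matrix.linftyOpSemiNormedRing
  letI : NormedRing (Matrix (Fin d) (Fin d) ℝ) := Matrix.linftyOpNormedRing
  letI : NormedAlgebra ℝ (Matrix (Fin d) (Fin d) ℝ) := Matrix.linftyOpNormedAlgebra
  exact (continuous_iff_continuousAt.2 fun x => (NormedSpace.exp_analytic (𝕂 := ℝ) x).continuousAt).comp (continuous_id.smul continuous_const)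

lemma matExp_transpose (s : ℝ) : (matExp s A)ᵀ = matExp s Aᵀ := by
  unfold matExp
  rw [← Matrix.exp_transpose, Matrix.transpose_smul]

lemma contM (t1 t2 : ℝ) :
    Continuous fun r : ℝ => (matExp (t1 - r) A * C * matExp (t2 - r) Aᵀ) := by
  have h1 : Continuous fun r : ℝ => matExp (t1 - r) A :=
    (matExp_continuous A).comp (continuous_const.sub continuous_id)
  have h2 : Continuous fun r : ℝ => matExp (t2 - r) Aᵀ :=
    (matExp_continuous Aᵀ).comp (continuous_const.sub continuous_id)
  exact (h1.matrix_mul continuous_const).matrix_mul h2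

lemma dot_form (M N : Matrix (Fin d) (Fin d) ℝ) (x y : Fin d → ℝ) :
    x ⬝ᵥ (M * C * N).mulVec y = (Mᵀ.mulVec x) ⬝ᵥ C.mulVec (N.mulVec y) := by
  rw [← Matrix.mulVec_mulVec, ← Matrix.mulVec_mulVec, Matrix.dotProduct_mulVec,
    ← Matrix.mulVec_transpose]

lemma dot_integral (a b : ℝ) (M : ℝ → Matrix (Fin d) (Fin d) ℝ)
    (hM : Continuous M) (x y : Fin d → ℝ) :
    x ⬝ᵥ (Matrix.of fun i j => ∫ r in a..b, M r i j).mulVec y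
      = ∫ r in a..b, x ⬝ᵥ (M r).mulVec y := by
  have h1 : ∀ N : Matrix (Fin d) (Fin d) ℝ,
      x ⬝ᵥ N.mulVec y = ∑ i, ∑ j, x i * N i j * y j := by
    intro N
    simp [dotProduct, Matrix.mulVec, Finset.mul_sum, mul_assoc]
  simp_rw [h1, Matrix.of_apply]
  rw [intervalIntegral.integral_finset_sum]
  · refine Finset.sum_congr rfl fun i _ => ?_
    rw [intervalIntegral.integral_finset_sum]
    · refine Finset.sum_congr rfl fun j _ => ?_
      rw [intervalIntegral.integral_mul_const, intervalIntegral.integral_const_mul]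
    · intro j _
      exact (((continuous_const.mul (hM.matrix_elem i j)).mul
        continuous_const).intervalIntegrable a b)
  · intro i _
    apply Continuous.intervalIntegrable
    exact continuous_finset_sum _ fun j _ =>
      (continuous_const.mul (hM.matrix_elem i j)).mul continuous_const

lemma dotProduct_sum' {m : ℕ} (u : Fin d → ℝ) (y : Fin m → Fin d → ℝ) :
    u ⬝ᵥ (∑ j, y j) = ∑ j, u ⬝ᵥ y j := by
  simp only [dotProduct, Finset.sum_apply, Finset.mul_sum]
  exact Finset.sum_comm

lemma sum_dotProduct' {m : ℕ} (u : Fin d → ℝ) (y : Fin m → Fin d → ℝ) :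
    (∑ j, y j) ⬝ᵥ u = ∑ j, y j ⬝ᵥ u := by
  simp only [dotProduct, Finset.sum_apply, Finset.sum_mul]
  exact Finset.sum_comm

lemma mulVec_sum' {m : ℕ} (y : Fin m → Fin d → ℝ) :
    C.mulVec (∑ j, y j) = ∑ j, C.mulVec (y j) := by
  simp only [← Matrix.mulVecLin_apply, map_sum]

lemma bilin_sum {m : ℕ} (c : Fin m → ℝ) (v : Fin m → Fin d → ℝ) :
    (∑ i, c i • v i) ⬝ᵥ C.mulVec (∑ j, c j • v j)
      = ∑ i, ∑ j, c i * c j * (v i ⬝ᵥ C.mulVec (v j)) := by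
  rw [sum_dotProduct']
  refine Finset.sum_congr rfl fun i _ => ?_
  rw [mulVec_sum', smul_dotProduct, dotProduct_sum', smul_eq_mul, Finset.mul_sum]
  refine Finset.sum_congr rfl fun j _ => ?_
  rw [show C.mulVec (c j • v j) = c j • C.mulVec (v j) from by
    simp only [← Matrix.mulVecLin_apply, _root_.map_smul],
    dotProduct_smul, smul_eq_mul]
  ring

lemma contM0 : Continuous fun s : ℝ => matExp s A * C * matExp s Aᵀ :=
  ((matExp_continuous A).matrix_mul continuous_const).matrix_mul (matExp_continuous Aᵀ)

lemma quad_nonneg (hC : C.PosSemidef) (x : Fin d → ℝ) : 0 ≤ x ⬝ᵥ C.mulVec x := by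
  simpa using hC.dotProduct_mulVec_nonneg x

lemma quad_form (s : ℝ) (x : Fin d → ℝ) :
    x ⬝ᵥ (matExp s A * C * matExp s Aᵀ).mulVec x
      = ((matExp s Aᵀ).mulVec x) ⬝ᵥ C.mulVec ((matExp s Aᵀ).mulVec x) := by
  rw [dot_form, matExp_transpose]

lemma covQ_posSemidef (hC : C.PosSemidef) (δ : ℝ) (hδ : 0 ≤ δ) :
    (covQ A C δ).PosSemidef := by
  have hCt : Cᵀ = C := by
    have := hC.1
    rwa [Matrix.IsHermitian, Matrix.conjTranspose_eq_transpose_of_trivial] at this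
  refine Matrix.PosSemidef.of_dotProduct_mulVec_nonneg ?_ ?_
  · ext i j
    have hsym : ∀ s : ℝ, (matExp s A * C * matExp s Aᵀ) j i
        = (matExp s A * C * matExp s Aᵀ) i j := by
      intro s
      conv_lhs => rw [show (matExp s A * C * matExp s Aᵀ) j i
        = (matExp s A * C * matExp s Aᵀ)ᵀ i j from rfl]
      rw [Matrix.transpose_mul, Matrix.transpose_mul]
      simp only [matExp_transpose]
      rw [Matrix.transpose_transpose, hCt, Matrix.mul_assoc]
    simp only [Matrix.conjTranspose_apply, star_trivial, covQ, Matrix.of_apply]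
    exact intervalIntegral.integral_congr fun s _ => hsym s
  · intro x
    have hx : star x = x := by simp
    rw [hx]
    show 0 ≤ x ⬝ᵥ (covQ A C δ).mulVec x
    rw [covQ, dot_integral _ _ _ (contM0 A C)]
    apply intervalIntegral.integral_nonneg hδ
    intro s _
    rw [quad_form]
    exact quad_nonneg C hC _

lemma vanish_of_quad_zero (hC : C.PosSemidef) (δ : ℝ) (hδ : 0 < δ)
    (hQ : IsUnit (covQ A C δ)) (x : Fin d → ℝ)
    (hx : x ⬝ᵥ (covQ A C δ).mulVec x = 0) : x = 0 := by
  have hpsd := covQ_posSemidef A C hC δ hδ.le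
  have h0 : (covQ A C δ) *ᵥ x = 0 := by
    rw [← (hpsd.dotProduct_mulVec_zero_iff x)]
    simpa using hx
  have hdet : IsUnit (covQ A C δ).det := (Matrix.isUnit_iff_isUnit_det _).mp hQ
  have hinv : (covQ A C δ)⁻¹ * covQ A C δ = 1 := Matrix.nonsing_inv_mul _ hdet
  calc x = ((covQ A C δ)⁻¹ * covQ A C δ) *ᵥ x := by rw [hinv, Matrix.one_mulVec]
    _ = (covQ A C δ)⁻¹ *ᵥ ((covQ A C δ) *ᵥ x) := by rw [Matrix.mulVec_mulVec]
    _ = 0 := by rw [h0, Matrix.mulVec_zero]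

/-- `g_i(r) = e^{(t_i - r)Aᵀ} x`. -/
noncomputable def gfun (ti : ℝ) (x : Fin d → ℝ) (r : ℝ) : Fin d → ℝ :=
  (matExp (ti - r) Aᵀ).mulVec x

lemma gfun_continuous (ti : ℝ) (x : Fin d → ℝ) : Continuous fun r => gfun A ti x r :=
  ((matExp_continuous Aᵀ).comp (continuous_const.sub continuous_id)).matrix_mulVec
    continuous_const

/-- scalar kernel `h_{ij}(r) = ⟨g_i(r), C g_j(r)⟩`. -/
noncomputable def hsc (ti tj : ℝ) (x y : Fin d → ℝ) (r : ℝ) : ℝ :=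
  gfun A ti x r ⬝ᵥ C.mulVec (gfun A tj y r)

lemma hsc_continuous (ti tj : ℝ) (x y : Fin d → ℝ) :
    Continuous fun r => hsc A C ti tj x y r :=
  (gfun_continuous A ti x).dotProduct
    (continuous_const.matrix_mulVec (gfun_continuous A tj y))

lemma hsc_eq (ti tj : ℝ) (x y : Fin d → ℝ) (r : ℝ) :
    hsc A C ti tj x y r
      = x ⬝ᵥ (matExp (ti - r) A * C * matExp (tj - r) Aᵀ).mulVec y := by
  rw [dot_form, matExp_transpose]
  rfl

/-- The combined vector `G(r) = Σ_i 1_{r ≤ t_i} g_i(r)`. -/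
noncomputable def gsum {m : ℕ} (t : Fin m → ℝ) (ξ : Fin m → Fin d → ℝ) (r : ℝ) :
    Fin d → ℝ :=
  ∑ i, (if r ≤ t i then (1:ℝ) else 0) • gfun A (t i) (ξ i) r

lemma ind_prod_eq {d' : ℕ} (A' C' : Matrix (Fin d') (Fin d') ℝ) (ti tj : ℝ)
    (x y : Fin d' → ℝ) :
    (fun r => (if r ≤ ti then (1:ℝ) else 0) * (if r ≤ tj then (1:ℝ) else 0)
        * hsc A' C' ti tj x y r)
      = Set.indicator {u : ℝ | u ≤ min ti tj} (hsc A' C' ti tj x y) := by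
  funext r
  by_cases h1 : r ≤ ti <;> by_cases h2 : r ≤ tj <;>
    simp [Set.indicator_apply, le_min_iff, h1, h2]

lemma ind_intervalIntegrable {d' : ℕ} (A' C' : Matrix (Fin d') (Fin d') ℝ)
    (ti tj a b : ℝ) (x y : Fin d' → ℝ) :
    IntervalIntegrable (fun r => (if r ≤ ti then (1:ℝ) else 0)
      * (if r ≤ tj then (1:ℝ) else 0) * hsc A' C' ti tj x y r) volume a b := by
  rw [ind_prod_eq]
  rw [intervalIntegrable_iff]
  have hcont := (hsc_continuous A' C' ti tj x y)
  have hint : IntegrableOn (hsc A' C' ti tj x y) (Set.uIoc a b) volume :=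
    hcont.integrableOn_uIoc
  exact hint.indicator measurableSet_Iic

lemma intervalIntegrable_finset_sum' {ι : Type*} (s : Finset ι) {f : ι → ℝ → ℝ} {a b : ℝ}
    (h : ∀ i ∈ s, IntervalIntegrable (f i) volume a b) :
    IntervalIntegrable (fun r => ∑ i ∈ s, f i r) volume a b := by
  have h2 := IntervalIntegrable.sum s h
  have hfe : (∑ i ∈ s, f i) = fun r => ∑ i ∈ s, f i r := by
    funext r; simp
  rwa [hfe] at h2

end Helpers

set_option maxHeartbeats 2000000 in
/-- Under Hypothesis 1, for times `0 < t₀ < ⋯ < t_{m-1} ≤ T` the symmetric block matrix with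
blocks `K(t_i,t_j)` is positive definite: the quadratic form
`Σ_{i,j} ⟨ξ_i, K(t_i,t_j) ξ_j⟩` is nonnegative and vanishes only at `ξ = 0`. -/
theorem block_K_posDef (d : ℕ) (hd : 1 ≤ d) (A C : Matrix (Fin d) (Fin d) ℝ)
    (hC : C.PosSemidef)
    (hQ : ∀ t : ℝ, 0 < t → IsUnit (covQ A C t))
    (T : ℝ) (hT : 0 < T)
    (m : ℕ) (hm : 1 ≤ m) (t : Fin m → ℝ) (htmono : StrictMono t)
    (htpos : ∀ i, 0 < t i) (htle : ∀ i, t i ≤ T)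
    (ξ : Fin m → Fin d → ℝ) :
    0 ≤ ∑ i, ∑ j, ξ i ⬝ᵥ (kerK A C (t i) (t j)).mulVec (ξ j) ∧
    ((∑ i, ∑ j, ξ i ⬝ᵥ (kerK A C (t i) (t j)).mulVec (ξ j)) = 0 → ξ = 0) := by
  classical
  -- the last time
  set lastIdx : Fin m := ⟨m - 1, by omega⟩ with hlastIdx
  set T' : ℝ := t lastIdx with hT'def
  have htleT' : ∀ i, t i ≤ T' := by
    intro i
    exact htmono.monotone (by
      show (i : ℕ) ≤ (lastIdx : ℕ)
      have := i.isLt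
      simp only [hlastIdx]
      omega)
  have hT'pos : 0 < T' := htpos lastIdx
  -- Step 1: each term is an integral over [0, T'] with indicators
  have step1 : ∀ i j, ξ i ⬝ᵥ (kerK A C (t i) (t j)).mulVec (ξ j)
      = ∫ r in (0:ℝ)..T', (if r ≤ t i then (1:ℝ) else 0)
          * (if r ≤ t j then (1:ℝ) else 0) * hsc A C (t i) (t j) (ξ i) (ξ j) r := by
    intro i j
    rw [kerK, dot_integral _ _ _ (contM A C (t i) (t j))]
    have e1 : (∫ r in (0:ℝ)..(min (t i) (t j)),
        ξ i ⬝ᵥ (matExp (t i - r) A * C * matExp (t j - r) Aᵀ).mulVec (ξ j))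
        = ∫ r in (0:ℝ)..(min (t i) (t j)), hsc A C (t i) (t j) (ξ i) (ξ j) r :=
      intervalIntegral.integral_congr fun r _ => (hsc_eq A C (t i) (t j) (ξ i) (ξ j) r).symm
    rw [e1, ind_prod_eq]
    rw [intervalIntegral.integral_indicator
      (Set.mem_Icc.mpr ⟨le_min (htpos i).le (htpos j).le,
        min_le_of_left_le (htleT' i)⟩)]
  -- Step 2: the full quadratic form is the integral of a pointwise PSD quantity
  have hintble : ∀ i j : Fin m, IntervalIntegrable
      (fun r => (if r ≤ t i then (1:ℝ) else 0) * (if r ≤ t j then (1:ℝ) else 0)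
        * hsc A C (t i) (t j) (ξ i) (ξ j) r) volume 0 T' :=
    fun i j => ind_intervalIntegrable A C (t i) (t j) 0 T' (ξ i) (ξ j)
  have step2 : (∑ i, ∑ j, ξ i ⬝ᵥ (kerK A C (t i) (t j)).mulVec (ξ j))
      = ∫ r in (0:ℝ)..T', gsum A t ξ r ⬝ᵥ C.mulVec (gsum A t ξ r) := by
    simp_rw [step1]
    have e2 : ∀ i : Fin m, (∑ j, ∫ r in (0:ℝ)..T',
        (if r ≤ t i then (1:ℝ) else 0) * (if r ≤ t j then (1:ℝ) else 0)
          * hsc A C (t i) (t j) (ξ i) (ξ j) r)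
        = ∫ r in (0:ℝ)..T', ∑ j, (if r ≤ t i then (1:ℝ) else 0)
            * (if r ≤ t j then (1:ℝ) else 0) * hsc A C (t i) (t j) (ξ i) (ξ j) r :=
      fun i => (intervalIntegral.integral_finset_sum fun j _ => hintble i j).symm
    simp_rw [e2]
    have e4 : (∫ r in (0:ℝ)..T', ∑ i : Fin m, ∑ j : Fin m,
          (if r ≤ t i then (1:ℝ) else 0) * (if r ≤ t j then (1:ℝ) else 0)
            * hsc A C (t i) (t j) (ξ i) (ξ j) r)
        = ∑ i : Fin m, ∫ r in (0:ℝ)..T', ∑ j : Fin m,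
            (if r ≤ t i then (1:ℝ) else 0) * (if r ≤ t j then (1:ℝ) else 0)
              * hsc A C (t i) (t j) (ξ i) (ξ j) r :=
      intervalIntegral.integral_finset_sum fun i _ =>
        intervalIntegrable_finset_sum' Finset.univ fun j _ => hintble i j
    rw [← e4]
    refine intervalIntegral.integral_congr fun r _ => ?_
    rw [show gsum A t ξ r
        = ∑ i, (if r ≤ t i then (1:ℝ) else 0) • gfun A (t i) (ξ i) r from rfl,
      bilin_sum]
    rfl
  -- Nonnegativity of the pointwise quantity
  have hPhi_nonneg : ∀ r : ℝ, 0 ≤ gsum A t ξ r ⬝ᵥ C.mulVec (gsum A t ξ r) :=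
    fun r => quad_nonneg C hC _
  constructor
  · rw [step2]
    exact intervalIntegral.integral_nonneg hT'pos.le fun u _ => hPhi_nonneg u
  · intro hzero
    rw [step2] at hzero
    -- Φ is interval integrable on [0, T']
    have hPhiInt : IntervalIntegrable
        (fun r => gsum A t ξ r ⬝ᵥ C.mulVec (gsum A t ξ r)) volume 0 T' := by
      have : (fun r => gsum A t ξ r ⬝ᵥ C.mulVec (gsum A t ξ r))
          = fun r => ∑ i, ∑ j, (if r ≤ t i then (1:ℝ) else 0)
              * (if r ≤ t j then (1:ℝ) else 0)
              * hsc A C (t i) (t j) (ξ i) (ξ j) r := by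
        funext r
        rw [show gsum A t ξ r
            = ∑ i, (if r ≤ t i then (1:ℝ) else 0) • gfun A (t i) (ξ i) r from rfl,
          bilin_sum]
        rfl
      rw [this]
      exact intervalIntegrable_finset_sum' Finset.univ fun i _ =>
        intervalIntegrable_finset_sum' Finset.univ fun j _ => hintble i j
    -- any subinterval integral of Φ vanishes
    have hsub : ∀ a b : ℝ, 0 ≤ a → a ≤ b → b ≤ T' →
        (∫ r in a..b, gsum A t ξ r ⬝ᵥ C.mulVec (gsum A t ξ r)) = 0 := by
      intro a b h0a hab hbT
      have hmem : ∀ c : ℝ, 0 ≤ c → c ≤ T' →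
          Set.uIcc c c ⊆ Set.uIcc (0:ℝ) T' := by
        intro c h1 h2
        rw [Set.uIcc_of_le hT'pos.le]
        intro x hx
        rw [Set.uIcc_self] at hx
        exact ⟨hx ▸ h1, hx ▸ h2⟩
      have hss : ∀ c e : ℝ, 0 ≤ c → c ≤ e → e ≤ T' →
          IntervalIntegrable (fun r => gsum A t ξ r ⬝ᵥ C.mulVec (gsum A t ξ r))
            volume c e := by
        intro c e h1 h2 h3
        refine hPhiInt.mono_set ?_
        rw [Set.uIcc_of_le h2, Set.uIcc_of_le hT'pos.le]
        exact Set.Icc_subset_Icc h1 h3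
      have h1 := intervalIntegral.integral_add_adjacent_intervals
        (hss 0 a le_rfl h0a (hab.trans hbT)) (hss a b h0a hab hbT)
      have h2 := intervalIntegral.integral_add_adjacent_intervals
        (hss 0 b le_rfl (h0a.trans hab) hbT) (hss b T' (h0a.trans hab) hbT le_rfl)
      have n1 : 0 ≤ ∫ r in (0:ℝ)..a, gsum A t ξ r ⬝ᵥ C.mulVec (gsum A t ξ r) :=
        intervalIntegral.integral_nonneg h0a fun u _ => hPhi_nonneg u
      have n2 : 0 ≤ ∫ r in a..b, gsum A t ξ r ⬝ᵥ C.mulVec (gsum A t ξ r) :=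
        intervalIntegral.integral_nonneg hab fun u _ => hPhi_nonneg u
      have n3 : 0 ≤ ∫ r in b..T', gsum A t ξ r ⬝ᵥ C.mulVec (gsum A t ξ r) :=
        intervalIntegral.integral_nonneg hbT fun u _ => hPhi_nonneg u
      rw [hzero] at h2
      linarith [h1, h2]
    -- key step: downward induction
    have key : ∀ i : Fin m, (∀ k, i < k → ξ k = 0) → ξ i = 0 := by
      intro i hk
      set prev : ℝ := if hi : 0 < (i : ℕ) then t ⟨(i : ℕ) - 1, by omega⟩ else 0
        with hprevdef
      have hprev0 : 0 ≤ prev := by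
        rw [hprevdef]
        split
        · exact (htpos _).le
        · exact le_rfl
      have hprevlt : prev < t i := by
        rw [hprevdef]
        split
        · next hi =>
            exact htmono (by show ((⟨(i : ℕ) - 1, by omega⟩ : Fin m) : ℕ) < (i : ℕ); simp; omega)
        · exact htpos i
      have hprevk : ∀ k : Fin m, k < i → t k ≤ prev := by
        intro k hki
        have hi : 0 < (i : ℕ) := lt_of_le_of_lt (Nat.zero_le _) hki
        rw [hprevdef, dif_pos hi]
        exact htmono.monotone (by
          show (k : ℕ) ≤ (i : ℕ) - 1
          have : (k : ℕ) < (i : ℕ) := hki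
          omega)
      -- on (prev, t i], G(r) = g_i(r)
      have hGr : ∀ r : ℝ, prev < r → r ≤ t i →
          gsum A t ξ r = gfun A (t i) (ξ i) r := by
        intro r h1 h2
        rw [show gsum A t ξ r
            = ∑ k, (if r ≤ t k then (1:ℝ) else 0) • gfun A (t k) (ξ k) r from rfl]
        rw [Finset.sum_eq_single i]
        · rw [if_pos h2, one_smul]
        · intro k _ hki
          rcases lt_or_gt_of_ne hki with hlt | hgt
          · rw [if_neg (not_le.mpr (lt_of_le_of_lt (hprevk k hlt) h1)), zero_smul]
          · rw [show gfun A (t k) (ξ k) r = 0 from by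
              rw [hk k hgt, gfun, Matrix.mulVec_zero], smul_zero]
        · intro hmem
          exact absurd (Finset.mem_univ i) hmem
      have hint0 : (∫ r in prev..(t i),
          gsum A t ξ r ⬝ᵥ C.mulVec (gsum A t ξ r)) = 0 :=
        hsub prev (t i) hprev0 hprevlt.le (htleT' i)
      have hcongr : (∫ r in prev..(t i),
            gsum A t ξ r ⬝ᵥ C.mulVec (gsum A t ξ r))
          = ∫ r in prev..(t i), hsc A C (t i) (t i) (ξ i) (ξ i) r := by
        refine intervalIntegral.integral_congr_ae
          (Filter.Eventually.of_forall fun r hr => ?_)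
        rw [Set.uIoc_of_le hprevlt.le] at hr
        rw [hGr r hr.1 hr.2]
        rfl
      have hint1 : (∫ r in prev..(t i), hsc A C (t i) (t i) (ξ i) (ξ i) r) = 0 := by
        rw [← hcongr]; exact hint0
      -- change of variables u = t i - r
      set δ : ℝ := t i - prev with hδdef
      have hδpos : 0 < δ := by rw [hδdef]; linarith
      have hchg : (∫ r in prev..(t i), hsc A C (t i) (t i) (ξ i) (ξ i) r)
          = ξ i ⬝ᵥ (covQ A C δ).mulVec (ξ i) := by
        have e3 : (∫ r in prev..(t i), hsc A C (t i) (t i) (ξ i) (ξ i) r)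
            = ∫ r in prev..(t i),
                (fun u => ξ i ⬝ᵥ (matExp u A * C * matExp u Aᵀ).mulVec (ξ i)) (t i - r) :=
          intervalIntegral.integral_congr fun r _ => by
            rw [hsc_eq]
        rw [e3, intervalIntegral.integral_comp_sub_left
          (fun u => ξ i ⬝ᵥ (matExp u A * C * matExp u Aᵀ).mulVec (ξ i)) (t i),
          sub_self]
        rw [covQ, dot_integral _ _ _ (contM0 A C)]
      have := hchg ▸ hint1
      exact vanish_of_quad_zero A C hC δ hδpos (hQ δ hδpos) (ξ i) this
    -- downward induction to conclude ξ = 0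
    have all : ∀ n : ℕ, ∀ i : Fin m, m ≤ (i : ℕ) + n + 1 → ξ i = 0 := by
      intro n
      induction n with
      | zero =>
          intro i hi
          refine key i fun k hki => absurd hki (by
            have := k.isLt
            have : (k : ℕ) < m := this
            intro hlt
            have : (i : ℕ) < (k : ℕ) := hlt
            omega)
      | succ n ih =>
          intro i hi
          refine key i fun k hki => ih k (by
            have : (i : ℕ) < (k : ℕ) := hki
            omega)
    funext i
    exact all m i (by omega)
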